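/- arXiv:1703.00718 — 2 statements merged into one kernel-verified Lean document; each statement's English description precedes it below -/
import Mathlib

section
/- Let f(t) = t^m − Σ_{i=0}^{m−1} a_i t^i ∈ K[t;σ] be monic of degree m ≥ 2 and not invariant (no commutation assumption on σ). For every k ∈ K^× satisfying a_i = (∏_{l=i}^{m−1} σ^l(k))·a_i for all i ∈ {0,…,m−1}, the map H_{id,k} is an F-algebra automorphism of S_f, and these maps H_{id,k} form a subgroup of Aut_F(S_f). -/
/-! ## The Petit algebra `S_f = K[t;σ]/K[t;σ]f`

For a twisted polynomial ring `R = K[t;σ]` (multiplication determined by `t·a = σ(a)·t`)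
and the monic skew polynomial `f(t) = t^m - Σ_{i<m} a_i t^i` (encoded by its coefficient
vector `a : Fin m → K`), the Petit algebra `S_f` is realised on coefficient vectors
`Fin m → K` (the polynomials of degree `< m`), with multiplication `g ∘ h = (gh) mod_r f`. -/

/-- The remainder of `t^s` after right division by `f(t) = t^m - Σ_{i<m} a_i t^i`:
for `s < m` it is `t^s` itself, and for `s ≥ m` one uses
`t^s ≡ Σ_i σ^{s-m}(a_i) t^{s-m+i} (mod R·f)`. -/
noncomputable def tred {K : Type*} [Field K] (σ : K → K) (m : ℕ) (a : Fin m → K) (s : ℕ) :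
    Fin m → K :=
  if _h : s < m then (fun i => if (i : ℕ) = s then (1 : K) else 0)
  else ∑ i : Fin m, σ^[s - m] (a i) • tred σ m a (s - m + (i : ℕ))
termination_by s
decreasing_by
  have hi := i.isLt
  omega

/-- The multiplication `g ∘ h = (gh) mod_r f` of the Petit algebra `S_f`. -/
noncomputable def pmul {K : Type*} [Field K] (σ : K → K) {m : ℕ} (a : Fin m → K)
    (x y : Fin m → K) : Fin m → K :=
  ∑ i : Fin m, ∑ j : Fin m, (x i * σ^[(i : ℕ)] (y j)) • tred σ m a ((i : ℕ) + (j : ℕ))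

/-- The unit element `1` of `S_f`. -/
noncomputable def pone (K : Type*) [Field K] (m : ℕ) : Fin m → K :=
  fun i => if (i : ℕ) = 0 then 1 else 0

/-- The element `t` of `S_f`. -/
noncomputable def tvec (K : Type*) [Field K] (m : ℕ) : Fin m → K :=
  fun i => if (i : ℕ) = 1 then 1 else 0

/-- The canonical copy of `c ∈ K` inside `S_f`. -/
noncomputable def iota (K : Type*) [Field K] (m : ℕ) (c : K) : Fin m → K :=
  fun i => if (i : ℕ) = 0 then c else 0

/-- `S_f` is associative; by Petit's theorem this holds if and only if `f` is
invariant (i.e. `R·f` is a two-sided ideal of `R = K[t;σ]`). -/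
def PAssoc {K : Type*} [Field K] (σ : K → K) {m : ℕ} (a : Fin m → K) : Prop :=
  ∀ x y z : Fin m → K, pmul σ a (pmul σ a x y) z = pmul σ a x (pmul σ a y z)

/-- `H` is an automorphism of the algebra `S_f` over `F = Fix(σ)`: an `F`-linear
bijection preserving the multiplication and the unit. -/
structure IsPetitAut {K : Type*} [Field K] (σ : K → K) {m : ℕ} (a : Fin m → K)
    (H : (Fin m → K) → (Fin m → K)) : Prop where
  bijective : Function.Bijective H
  map_add : ∀ x y, H (x + y) = H x + H y
  map_smul : ∀ c : K, σ c = c → ∀ x, H (c • x) = c • H x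
  map_mul : ∀ x y, H (pmul σ a x y) = pmul σ a (H x) (H y)
  map_one : H (pone K m) = pone K m

/-- `H` is an inner automorphism `x ↦ (c_l ∘ x) ∘ c` of `S_f`, where `c_l` is a
left inverse of `c`. -/
def IsInnerPetit {K : Type*} [Field K] (σ : K → K) {m : ℕ} (a : Fin m → K)
    (H : (Fin m → K) → (Fin m → K)) : Prop :=
  ∃ c cl : Fin m → K, pmul σ a cl c = pone K m ∧
    ∀ x, H x = pmul σ a (pmul σ a cl x) c

/-- The map `H_{τ,k} : Σ x_i t^i ↦ τ(x_0) + Σ_{i≥1} τ(x_i)·(Π_{l<i} σ^l(k))·t^i`. -/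
noncomputable def Hmap {K : Type*} [Field K] (σ τ : K → K) {m : ℕ} (k : K)
    (x : Fin m → K) : Fin m → K :=
  fun i => τ (x i) * ∏ l ∈ Finset.range (i : ℕ), σ^[l] k

section Aux

variable {K : Type*} [Field K] (σ : K ≃+* K)

lemma iter_mul (n : ℕ) (x y : K) : (⇑σ)^[n] (x * y) = (⇑σ)^[n] x * (⇑σ)^[n] y := by
  induction n with
  | zero => simp
  | succ n ih => simp [Function.iterate_succ_apply', ih, map_mul]

lemma iter_one (n : ℕ) : (⇑σ)^[n] (1 : K) = 1 := by
  induction n with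
  | zero => simp
  | succ n ih => simp [Function.iterate_succ_apply', ih]

lemma iter_inv (n : ℕ) (x : K) : (⇑σ)^[n] x⁻¹ = ((⇑σ)^[n] x)⁻¹ := by
  induction n with
  | zero => simp
  | succ n ih => simp [Function.iterate_succ_apply', ih, map_inv₀]

lemma iter_ne (n : ℕ) {x : K} (hx : x ≠ 0) : (⇑σ)^[n] x ≠ 0 := by
  induction n with
  | zero => simpa
  | succ n ih =>
    rw [Function.iterate_succ_apply']
    intro h
    exact ih (σ.injective (h.trans (map_zero σ).symm))

lemma iter_prod {ι : Type*} (n : ℕ) (s : Finset ι) (g : ι → K) :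
    (⇑σ)^[n] (∏ x ∈ s, g x) = ∏ x ∈ s, (⇑σ)^[n] (g x) := by
  classical
  induction s using Finset.induction with
  | empty => simp [iter_one]
  | insert _ _ h ih => simp [Finset.prod_insert h, iter_mul, ih]

/-- `Pn σ k s = ∏_{l<s} σ^l(k)`. -/
noncomputable def Pn (k : K) (s : ℕ) : K := ∏ l ∈ Finset.range s, (⇑σ)^[l] k

lemma Pn_zero (k : K) : Pn σ k 0 = 1 := by simp [Pn]

lemma Pn_add (k : K) (i j : ℕ) : Pn σ k (i + j) = Pn σ k i * (⇑σ)^[i] (Pn σ k j) := by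
  rw [Pn, Pn, Pn, Finset.prod_range_add, iter_prod]
  congr 1
  refine Finset.prod_congr rfl fun l _ => ?_
  rw [← Function.iterate_add_apply]

lemma Pn_mul (k k' : K) (s : ℕ) : Pn σ (k * k') s = Pn σ k s * Pn σ k' s := by
  rw [Pn, Pn, Pn, ← Finset.prod_mul_distrib]
  exact Finset.prod_congr rfl fun l _ => iter_mul σ l k k'

lemma Pn_inv (k : K) (s : ℕ) : Pn σ k⁻¹ s = (Pn σ k s)⁻¹ := by
  rw [Pn, Pn, ← Finset.prod_inv_distrib]
  exact Finset.prod_congr rfl fun l _ => iter_inv σ l k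

lemma Pn_ne {k : K} (hk : k ≠ 0) (s : ℕ) : Pn σ k s ≠ 0 :=
  Finset.prod_ne_zero_iff.mpr fun l _ => iter_ne σ l hk

lemma Hmap_apply (k : K) {m : ℕ} (x : Fin m → K) (i : Fin m) :
    Hmap (⇑σ) (id : K → K) k x i = x i * Pn σ k (i : ℕ) := rfl

/-- Key lemma: under the hypothesis on `a`, `Pn s · tred s = Pn r · tred s` pointwise. -/
lemma tred_key {m : ℕ} (a : Fin m → K) (k : K)
    (ha : ∀ i : Fin m, a i = (∏ l ∈ Finset.Ico (i : ℕ) m, (⇑σ)^[l] k) * a i) :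
    ∀ s : ℕ, ∀ r : Fin m,
      Pn σ k s * tred (⇑σ) m a s r = Pn σ k (r : ℕ) * tred (⇑σ) m a s r := by
  intro s
  induction s using Nat.strong_induction_on with
  | _ s ih =>
    intro r
    rw [tred]
    by_cases h : s < m
    · rw [dif_pos h]
      by_cases hr : (r : ℕ) = s
      · simp [hr]
      · simp [hr]
    · rw [dif_neg h]
      push_neg at h
      simp only [Finset.sum_apply, Pi.smul_apply, smul_eq_mul]
      rw [Finset.mul_sum, Finset.mul_sum]
      refine Finset.sum_congr rfl fun i _ => ?_
      have hi := i.isLt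
      have hrec := ih (s - m + (i : ℕ)) (by omega) r
      set c := (⇑σ)^[s - m] (a i) with hc
      set T := tred (⇑σ) m a (s - m + (i : ℕ)) r with hT
      have key : c * Pn σ k s = c * Pn σ k (s - m + (i : ℕ)) := by
        have hsplit : Pn σ k s
            = Pn σ k (s - m + (i : ℕ)) * (⇑σ)^[s - m] (∏ l ∈ Finset.Ico (i : ℕ) m, (⇑σ)^[l] k) := by
          have hs : s = (s - m + (i : ℕ)) + (m - (i : ℕ)) := by omega
          simp only [Pn]
          rw [iter_prod, Finset.prod_Ico_eq_prod_range]
          conv_lhs => rw [hs]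
          rw [Finset.prod_range_add]
          congr 1
          refine Finset.prod_congr rfl fun l _ => ?_
          rw [← Function.iterate_add_apply]
          congr 1
          omega
        have hQ : c * (⇑σ)^[s - m] (∏ l ∈ Finset.Ico (i : ℕ) m, (⇑σ)^[l] k) = c := by
          rw [hc, ← iter_mul]
          congr 1
          rw [mul_comm]
          exact (ha i).symm
        calc c * Pn σ k s
            = (c * (⇑σ)^[s - m] (∏ l ∈ Finset.Ico (i : ℕ) m, (⇑σ)^[l] k))
              * Pn σ k (s - m + (i : ℕ)) := by rw [hsplit]; ring
          _ = c * Pn σ k (s - m + (i : ℕ)) := by rw [hQ]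
      calc Pn σ k s * (c * T) = (c * Pn σ k s) * T := by ring
        _ = (c * Pn σ k (s - m + (i : ℕ))) * T := by rw [key]
        _ = c * (Pn σ k (s - m + (i : ℕ)) * T) := by ring
        _ = c * (Pn σ k (r : ℕ) * T) := by rw [hrec]
        _ = Pn σ k (r : ℕ) * (c * T) := by ring

/-- `H_{id,k}` is multiplicative. -/
lemma Hmap_hom {m : ℕ} (a : Fin m → K) (k : K)
    (ha : ∀ i : Fin m, a i = (∏ l ∈ Finset.Ico (i : ℕ) m, (⇑σ)^[l] k) * a i)
    (x y : Fin m → K) :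
    Hmap (⇑σ) (id : K → K) k (pmul (⇑σ) a x y)
      = pmul (⇑σ) a (Hmap (⇑σ) (id : K → K) k x) (Hmap (⇑σ) (id : K → K) k y) := by
  funext r
  rw [Hmap_apply]
  simp only [pmul, Finset.sum_apply, Pi.smul_apply, smul_eq_mul, Finset.sum_mul]
  refine Finset.sum_congr rfl fun i _ => ?_
  refine Finset.sum_congr rfl fun j _ => ?_
  rw [Hmap_apply, Hmap_apply, iter_mul]
  have h1 : Pn σ k (i : ℕ) * (⇑σ)^[(i : ℕ)] (Pn σ k (j : ℕ)) = Pn σ k ((i : ℕ) + (j : ℕ)) :=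
    (Pn_add σ k i j).symm
  have h2 := tred_key σ a k ha ((i : ℕ) + (j : ℕ)) r
  set T := tred (⇑σ) m a ((i : ℕ) + (j : ℕ)) r with hT
  calc x i * (⇑σ)^[(i : ℕ)] (y j) * T * Pn σ k (r : ℕ)
      = x i * (⇑σ)^[(i : ℕ)] (y j) * (Pn σ k (r : ℕ) * T) := by ring
    _ = x i * (⇑σ)^[(i : ℕ)] (y j) * (Pn σ k ((i : ℕ) + (j : ℕ)) * T) := by rw [h2]
    _ = x i * (⇑σ)^[(i : ℕ)] (y j) * (Pn σ k (i : ℕ) * (⇑σ)^[(i : ℕ)] (Pn σ k (j : ℕ)) * T) := by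
        rw [h1]
    _ = x i * Pn σ k (i : ℕ) * ((⇑σ)^[(i : ℕ)] (y j) * (⇑σ)^[(i : ℕ)] (Pn σ k (j : ℕ))) * T := by
        ring

lemma Hmap_comp {m : ℕ} (k k' : K) :
    (Hmap (⇑σ) (id : K → K) k : (Fin m → K) → Fin m → K) ∘ Hmap (⇑σ) (id : K → K) k'
      = Hmap (⇑σ) (id : K → K) (k * k') := by
  funext x i
  simp only [Function.comp_apply, Hmap_apply, Pn_mul]
  ring

end Aux

/-- **Proposition 2.4 (i).** Let `f(t) = t^m − Σ_{i<m} a_i t^i ∈ K[t;σ]` (`m ≥ 2`) be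
not invariant (equivalently, `S_f` not associative); no commutation assumption on `σ`.
For every `k ∈ K^×` with `a_i = (Π_{l=i}^{m−1} σ^l(k))·a_i` for all `i`, the map
`H_{id,k}` is an `F`-algebra automorphism of `S_f`, and these maps form a subgroup of
`Aut_F(S_f)`. -/
theorem stmt6 {K : Type*} [Field K] (σ : K ≃+* K) (hσ : σ ≠ RingEquiv.refl K)
    (m : ℕ) (hm : 2 ≤ m) (a : Fin m → K)
    (hna : ¬ PAssoc (⇑σ) a) :
    (∀ k : K, k ≠ 0 →
      (∀ i : Fin m, a i = (∏ l ∈ Finset.Ico (i : ℕ) m, (⇑σ)^[l] k) * a i) →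
      IsPetitAut (⇑σ) a (Hmap (⇑σ) (id : K → K) k))
    ∧ (∀ k k' : K, k ≠ 0 → k' ≠ 0 →
      (∀ i : Fin m, a i = (∏ l ∈ Finset.Ico (i : ℕ) m, (⇑σ)^[l] k) * a i) →
      (∀ i : Fin m, a i = (∏ l ∈ Finset.Ico (i : ℕ) m, (⇑σ)^[l] k') * a i) →
      (k * k' ≠ 0) ∧
      (∀ i : Fin m, a i = (∏ l ∈ Finset.Ico (i : ℕ) m, (⇑σ)^[l] (k * k')) * a i) ∧
      (Hmap (⇑σ) (id : K → K) k : (Fin m → K) → Fin m → K) ∘ Hmap (⇑σ) (id : K → K) k'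
        = Hmap (⇑σ) (id : K → K) (k * k'))
    ∧ (∀ k : K, k ≠ 0 →
      (∀ i : Fin m, a i = (∏ l ∈ Finset.Ico (i : ℕ) m, (⇑σ)^[l] k) * a i) →
      (∀ i : Fin m, a i = (∏ l ∈ Finset.Ico (i : ℕ) m, (⇑σ)^[l] k⁻¹) * a i) ∧
      (Hmap (⇑σ) (id : K → K) k : (Fin m → K) → Fin m → K) ∘ Hmap (⇑σ) (id : K → K) k⁻¹
        = id ∧
      (Hmap (⇑σ) (id : K → K) k⁻¹ : (Fin m → K) → Fin m → K) ∘ Hmap (⇑σ) (id : K → K) k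
        = id) := by
  have Pn_one : ∀ s : ℕ, Pn σ (1 : K) s = 1 := by
    intro s; simp [Pn, iter_one]
  have Hmap_one_eq : (Hmap (⇑σ) (id : K → K) (1 : K) : (Fin m → K) → Fin m → K) = id := by
    funext x i
    simp [Hmap_apply, Pn_one]
  refine ⟨?_, ?_, ?_⟩
  · -- each H_{id,k} is an automorphism
    intro k hk ha
    refine ⟨?_, ?_, ?_, ?_, ?_⟩
    · refine Function.bijective_iff_has_inverse.mpr
        ⟨Hmap (⇑σ) (id : K → K) k⁻¹, fun x => ?_, fun x => ?_⟩
      · funext i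
        simp only [Hmap_apply, Pn_inv, mul_assoc]
        rw [mul_inv_cancel₀ (Pn_ne σ hk (i : ℕ)), mul_one]
      · funext i
        simp only [Hmap_apply, Pn_inv, mul_assoc]
        rw [inv_mul_cancel₀ (Pn_ne σ hk (i : ℕ)), mul_one]
    · intro x y
      funext i
      simp only [Hmap_apply, Pi.add_apply, add_mul]
    · intro c _ x
      funext i
      simp only [Hmap_apply, Pi.smul_apply, smul_eq_mul, mul_assoc]
    · exact Hmap_hom σ a k ha
    · funext i
      by_cases h : (i : ℕ) = 0
      · simp [Hmap_apply, pone, h, Pn_zero]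
      · simp [Hmap_apply, pone, h]
  · -- closed under composition
    intro k k' hk hk' ha ha'
    refine ⟨mul_ne_zero hk hk', fun i => ?_, Hmap_comp σ k k'⟩
    have hsplit : ∏ l ∈ Finset.Ico (i : ℕ) m, (⇑σ)^[l] (k * k')
        = (∏ l ∈ Finset.Ico (i : ℕ) m, (⇑σ)^[l] k)
          * ∏ l ∈ Finset.Ico (i : ℕ) m, (⇑σ)^[l] k' := by
      rw [← Finset.prod_mul_distrib]
      exact Finset.prod_congr rfl fun l _ => iter_mul σ l k k'
    rw [hsplit, mul_assoc, ← ha' i]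
    exact ha i
  · -- closed under inverses
    intro k hk ha
    have hainv : ∀ i : Fin m,
        a i = (∏ l ∈ Finset.Ico (i : ℕ) m, (⇑σ)^[l] k⁻¹) * a i := by
      intro i
      have hQinv : ∏ l ∈ Finset.Ico (i : ℕ) m, (⇑σ)^[l] k⁻¹
          = (∏ l ∈ Finset.Ico (i : ℕ) m, (⇑σ)^[l] k)⁻¹ := by
        rw [← Finset.prod_inv_distrib]
        exact Finset.prod_congr rfl fun l _ => iter_inv σ l k
      by_cases hai : a i = 0
      · simp [hai]
      · have hQ1 : (∏ l ∈ Finset.Ico (i : ℕ) m, (⇑σ)^[l] k) = 1 :=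
          mul_right_cancel₀ hai (by rw [one_mul]; exact (ha i).symm)
        rw [hQinv, hQ1]
        simp
    refine ⟨hainv, ?_, ?_⟩
    · rw [Hmap_comp, mul_inv_cancel₀ hk, Hmap_one_eq]
    · rw [Hmap_comp, inv_mul_cancel₀ hk, Hmap_one_eq]
end

section
/- Let f(t) = t^2 − a_1 t − a_0 ∈ K[t;σ] be not invariant. Then a map H : S_f → S_f is an F-algebra automorphism of S_f if and only if H = H_{τ,k} for some τ ∈ Aut_F(K) and k ∈ K^× such that τ ∘ σ = σ ∘ τ, τ(a_0) = kσ(k)a_0, and τ(a_1) = σ(k)a_1. -/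
section PetitAux

variable {K : Type*} [Field K]

lemma pmul2 (σ : K → K) (a0 a1 : K) (x y : Fin 2 → K) :
    pmul σ ![a0, a1] x y =
      ![x 0 * y 0 + x 1 * σ (y 1) * a0,
        x 0 * y 1 + x 1 * σ (y 0) + x 1 * σ (y 1) * a1] := by
  have h0 : tred σ 2 ![a0,a1] 0 = ![1,0] := by
    rw [tred]; simp; funext i; fin_cases i <;> simp
  have h1 : tred σ 2 ![a0,a1] 1 = ![0,1] := by
    rw [tred]; simp; funext i; fin_cases i <;> simp
  have h2 : tred σ 2 ![a0,a1] 2 = ![a0,a1] := by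
    rw [tred]; simp [Fin.sum_univ_two, h0, h1]
  simp [pmul, Fin.sum_univ_two, h0, h1, h2]
  ring

lemma Hmap2 (σ τ : K → K) (k : K) (x : Fin 2 → K) :
    Hmap σ τ k x = ![τ (x 0), τ (x 1) * k] := by
  funext i; fin_cases i <;> simp [Hmap]

/-- first associator coefficient -/
def Eas0 (σ : K → K) (a0 a1 : K) (z : Fin 2 → K) : K :=
  a0 * z 0 - a0 * σ (σ (z 0)) + a0 * a1 * σ (z 1) - a0 * σ a1 * σ (σ (z 1))

/-- second associator coefficient -/
def Eas1 (σ : K → K) (a0 a1 : K) (z : Fin 2 → K) : K :=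
  a0 * z 1 - σ a0 * σ (σ (z 1)) + a1 * σ (z 0) - a1 * σ (σ (z 0))
    + a1 * a1 * σ (z 1) - a1 * σ a1 * σ (σ (z 1))

lemma assoc_iff (σ : K ≃+* K) (a0 a1 : K) (x y z : Fin 2 → K) :
    pmul (⇑σ) ![a0,a1] (pmul (⇑σ) ![a0,a1] x y) z
      = pmul (⇑σ) ![a0,a1] x (pmul (⇑σ) ![a0,a1] y z) ↔
    (x 1 * σ (y 1) * Eas0 (⇑σ) a0 a1 z = 0 ∧ x 1 * σ (y 1) * Eas1 (⇑σ) a0 a1 z = 0) := by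
  rw [pmul2, pmul2, pmul2, pmul2, funext_iff, Fin.forall_fin_two]
  simp only [Matrix.cons_val_zero, Matrix.cons_val_one, Matrix.head_cons, map_add, map_mul]
  constructor
  · rintro ⟨h0, h1⟩
    exact ⟨by simp only [Eas0]; linear_combination h0,
           by simp only [Eas1]; linear_combination h1⟩
  · rintro ⟨h0, h1⟩
    simp only [Eas0] at h0
    simp only [Eas1] at h1
    exact ⟨by linear_combination h0, by linear_combination h1⟩

lemma petit_reverse (σ τ : K ≃+* K) (a0 a1 k : K) (hk : k ≠ 0)
    (hfix : ∀ c : K, σ c = c → τ c = c) (hcomm : ∀ x : K, τ (σ x) = σ (τ x))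
    (ha0 : τ a0 = k * σ k * a0) (ha1 : τ a1 = σ k * a1) :
    IsPetitAut (⇑σ) ![a0, a1] (Hmap (⇑σ) (⇑τ) k) := by
  constructor
  · -- bijective
    apply Function.bijective_iff_has_inverse.mpr
    refine ⟨fun y => ![τ.symm (y 0), τ.symm (y 1 * k⁻¹)], ?_, ?_⟩
    · intro x
      rw [Hmap2]
      funext i; fin_cases i
      · simp
      · simp only [Matrix.cons_val_one, Matrix.head_cons]
        have : τ (x 1) * k * k⁻¹ = τ (x 1) := by field_simp
        simp [this]
    · intro y
      rw [Hmap2]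
      funext i; fin_cases i
      · simp
      · simp
        field_simp
  · intro x y
    funext i
    simp [Hmap, map_add, add_mul]
  · intro c hc x
    funext i
    simp [Hmap, map_mul, hfix c hc, mul_assoc]
  · intro x y
    rw [pmul2, Hmap2, Hmap2, Hmap2, pmul2, funext_iff, Fin.forall_fin_two]
    simp only [Matrix.cons_val_zero, Matrix.cons_val_one, Matrix.head_cons, map_add, map_mul,
      hcomm]
    constructor
    · linear_combination (τ (x 1) * σ (τ (y 1))) * ha0
    · linear_combination (τ (x 1) * σ (τ (y 1)) * k) * ha1
  · funext i; fin_cases i <;> simp [Hmap, pone]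

end PetitAux

section PetitFwd

variable {K : Type*} [Field K]

lemma iota_inj {c d : K} (h : iota K 2 c = iota K 2 d) : c = d := by
  simpa [iota] using congrFun h 0

lemma iota_add (c d : K) : iota K 2 (c + d) = iota K 2 c + iota K 2 d := by
  funext i; by_cases h : (i : ℕ) = 0 <;> simp [iota, h]

lemma iota_mul (σ : K → K) (a0 a1 : K) (c d : K) :
    pmul σ ![a0, a1] (iota K 2 c) (iota K 2 d) = iota K 2 (c * d) := by
  rw [pmul2]; funext i; fin_cases i <;> simp [iota]

lemma smul_pone (c : K) : c • pone K 2 = iota K 2 c := by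
  funext i; by_cases h : (i : ℕ) = 0 <;> simp [pone, iota, h]

lemma tvec_iota (σ : K ≃+* K) (a0 a1 : K) (c : K) :
    pmul (⇑σ) ![a0, a1] (tvec K 2) (iota K 2 c)
      = pmul (⇑σ) ![a0, a1] (iota K 2 (σ c)) (tvec K 2) := by
  rw [pmul2, pmul2]; funext i; fin_cases i <;> simp [iota, tvec]

lemma tvec_sq (σ : K ≃+* K) (a0 a1 : K) :
    pmul (⇑σ) ![a0, a1] (tvec K 2) (tvec K 2) = ![a0, a1] := by
  rw [pmul2]; funext i; fin_cases i <;> simp [tvec]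

lemma pdecomp (σ : K → K) (a0 a1 : K) (x : Fin 2 → K) :
    x = iota K 2 (x 0) + pmul σ ![a0, a1] (iota K 2 (x 1)) (tvec K 2) := by
  rw [pmul2]; funext i; fin_cases i <;> simp [iota, tvec]

lemma petit_forward (σ : K ≃+* K) (hσ : σ ≠ RingEquiv.refl K) (a0 a1 : K)
    (hna : ¬ PAssoc (⇑σ) ![a0, a1]) (H : (Fin 2 → K) → (Fin 2 → K))
    (hA : IsPetitAut (⇑σ) ![a0, a1] H) :
    ∃ τ : K ≃+* K, (∀ c : K, σ c = c → τ c = c) ∧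
      (∀ x : K, τ (σ x) = σ (τ x)) ∧
      ∃ k : K, k ≠ 0 ∧ τ a0 = k * σ k * a0 ∧ τ a1 = σ k * a1 ∧
        H = Hmap (⇑σ) (⇑τ) k := by
  -- a point where the associator coefficients do not both vanish
  obtain ⟨x₀, y₀, z₀, hxyz⟩ : ∃ x y z : Fin 2 → K,
      pmul (⇑σ) ![a0,a1] (pmul (⇑σ) ![a0,a1] x y) z
        ≠ pmul (⇑σ) ![a0,a1] x (pmul (⇑σ) ![a0,a1] y z) := by
    simpa [PAssoc, not_forall] using hna
  have hz : Eas0 (⇑σ) a0 a1 z₀ ≠ 0 ∨ Eas1 (⇑σ) a0 a1 z₀ ≠ 0 := by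
    by_contra h
    push_neg at h
    exact hxyz ((assoc_iff σ a0 a1 x₀ y₀ z₀).mpr (by simp [h.1, h.2]))
  -- the left nucleus is {x | x 1 = 0}
  have N1 : ∀ x : Fin 2 → K, x 1 = 0 → ∀ y z : Fin 2 → K,
      pmul (⇑σ) ![a0,a1] (pmul (⇑σ) ![a0,a1] x y) z
        = pmul (⇑σ) ![a0,a1] x (pmul (⇑σ) ![a0,a1] y z) := by
    intro x hx y z
    rw [assoc_iff]
    simp [hx]
  have N2 : ∀ x : Fin 2 → K, (∀ y z : Fin 2 → K,
      pmul (⇑σ) ![a0,a1] (pmul (⇑σ) ![a0,a1] x y) z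
        = pmul (⇑σ) ![a0,a1] x (pmul (⇑σ) ![a0,a1] y z)) → x 1 = 0 := by
    intro x hx
    have h := (assoc_iff σ a0 a1 x (tvec K 2) z₀).mp (hx _ _)
    have ht : σ (tvec K 2 1) = 1 := by simp [tvec]
    rw [ht, mul_one] at h
    rcases hz with h' | h'
    · rcases mul_eq_zero.mp h.1 with h'' | h''
      · exact h''
      · exact absurd h'' h'
    · rcases mul_eq_zero.mp h.2 with h'' | h''
      · exact h''
      · exact absurd h'' h'
  have hNucH : ∀ x : Fin 2 → K, x 1 = 0 → H x 1 = 0 := by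
    intro x hx
    apply N2
    intro y z
    obtain ⟨y', hy'⟩ := hA.bijective.surjective y
    obtain ⟨z', hz'⟩ := hA.bijective.surjective z
    rw [← hy', ← hz', ← hA.map_mul, ← hA.map_mul, ← hA.map_mul, ← hA.map_mul,
      N1 x hx y' z']
  have hNucHinv : ∀ x : Fin 2 → K, H x 1 = 0 → x 1 = 0 := by
    intro x hx
    apply N2
    intro y z
    apply hA.bijective.injective
    rw [hA.map_mul, hA.map_mul, hA.map_mul, hA.map_mul, N1 (H x) hx (H y) (H z)]
  set τf : K → K := fun c => H (iota K 2 c) 0 with hτf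
  have hiota : ∀ c : K, H (iota K 2 c) = iota K 2 (τf c) := by
    intro c
    funext i
    fin_cases i
    · simp [iota]; rfl
    · have h1 : H (iota K 2 c) 1 = 0 := hNucH _ (by simp [iota])
      simpa [iota] using h1
  have τadd : ∀ c d : K, τf (c + d) = τf c + τf d := by
    intro c d
    apply iota_inj
    rw [← hiota, iota_add, hA.map_add, hiota, hiota, iota_add]
  have τmul : ∀ c d : K, τf (c * d) = τf c * τf d := by
    intro c d
    apply iota_inj
    rw [← hiota, ← iota_mul (⇑σ) a0 a1, hA.map_mul, hiota, hiota, iota_mul]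
  have τinj : Function.Injective τf := by
    intro c d h
    apply iota_inj
    apply hA.bijective.injective
    rw [hiota, hiota, h]
  have τsurj : Function.Surjective τf := by
    intro d
    obtain ⟨x, hx⟩ := hA.bijective.surjective (iota K 2 d)
    have hx1 : x 1 = 0 := hNucHinv x (by rw [hx]; simp [iota])
    have hxi : x = iota K 2 (x 0) := by
      funext i; fin_cases i
      · simp [iota]
      · simpa [iota] using hx1
    refine ⟨x 0, iota_inj ?_⟩
    rw [← hiota, ← hxi, hx]
  have hfix : ∀ c : K, σ c = c → τf c = c := by
    intro c hc
    apply iota_inj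
    rw [← hiota, ← smul_pone, hA.map_smul c hc, hA.map_one, smul_pone]
  -- relations from t·c = σ(c)·t
  have hrel : ∀ c : K, pmul (⇑σ) ![a0,a1] (H (tvec K 2)) (iota K 2 (τf c))
      = pmul (⇑σ) ![a0,a1] (iota K 2 (τf (σ c))) (H (tvec K 2)) := by
    intro c
    rw [← hiota, ← hiota, ← hA.map_mul, ← hA.map_mul, tvec_iota]
  have hb : ∀ c : K, H (tvec K 2) 0 * τf c = τf (σ c) * H (tvec K 2) 0 := by
    intro c
    have h := congrFun (hrel c) 0
    rw [pmul2, pmul2] at h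
    simpa [iota] using h
  have hkrel : ∀ c : K, H (tvec K 2) 1 * σ (τf c) = τf (σ c) * H (tvec K 2) 1 := by
    intro c
    have h := congrFun (hrel c) 1
    rw [pmul2, pmul2] at h
    simpa [iota] using h
  have hk0 : H (tvec K 2) 1 ≠ 0 := by
    intro h
    have := hNucHinv (tvec K 2) h
    simp [tvec] at this
  have hcomm : ∀ c : K, τf (σ c) = σ (τf c) := by
    intro c
    apply mul_right_cancel₀ hk0
    linear_combination -hkrel c
  have hbz : H (tvec K 2) 0 = 0 := by
    by_contra hb0
    have hfixall : ∀ c : K, σ c = c := by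
      intro c
      have h := hb c
      have : τf c = τf (σ c) := by
        apply mul_left_cancel₀ hb0
        linear_combination h
      exact (τinj this.symm)
    exact hσ (RingEquiv.ext hfixall)
  have htv : H (tvec K 2) = ![0, H (tvec K 2) 1] := by
    funext i; fin_cases i
    · simpa using hbz
    · simp
  have hH : ∀ x : Fin 2 → K, H x = iota K 2 (τf (x 0))
      + pmul (⇑σ) ![a0,a1] (iota K 2 (τf (x 1))) (H (tvec K 2)) := by
    intro x
    conv_lhs => rw [pdecomp (⇑σ) a0 a1 x]
    rw [hA.map_add, hA.map_mul, hiota, hiota]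
  -- relations from t² = a₀ + a₁ t
  have hsq := hA.map_mul (tvec K 2) (tvec K 2)
  rw [tvec_sq, htv, pmul2, hH ![a0,a1]] at hsq
  have ha0 : τf a0 = H (tvec K 2) 1 * σ (H (tvec K 2) 1) * a0 := by
    have h := congrFun hsq 0
    rw [pmul2] at h
    simpa [iota, hbz] using h
  have ha1 : τf a1 = σ (H (tvec K 2) 1) * a1 := by
    have h := congrFun hsq 1
    rw [pmul2] at h
    simp [iota, hbz] at h
    apply mul_right_cancel₀ hk0
    rw [mul_comm (τf a1)]
    linear_combination h
  refine ⟨{ Equiv.ofBijective τf ⟨τinj, τsurj⟩ with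
            map_mul' := τmul, map_add' := τadd }, hfix, hcomm, H (tvec K 2) 1,
          hk0, ha0, ha1, ?_⟩
  funext x
  change H x = Hmap (⇑σ) τf (H (tvec K 2) 1) x
  rw [Hmap2, hH x, htv, pmul2]
  funext i; fin_cases i <;> simp [iota]

end PetitFwd

/-- **Proposition 2.4 (iii).** Let `f(t) = t² − a₁t − a₀ ∈ K[t;σ]` be not invariant
(equivalently, `S_f` not associative).  Then `H` is an `F`-algebra automorphism of
`S_f` if and only if `H = H_{τ,k}` for some `τ ∈ Aut_F(K)` and `k ∈ K^×` with
`τ∘σ = σ∘τ`, `τ(a₀) = kσ(k)a₀` and `τ(a₁) = σ(k)a₁`. -/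
theorem stmt7 {K : Type*} [Field K] (σ : K ≃+* K) (hσ : σ ≠ RingEquiv.refl K)
    (a0 a1 : K)
    (hna : ¬ PAssoc (⇑σ) ![a0, a1]) :
    ∀ H : (Fin 2 → K) → (Fin 2 → K),
      IsPetitAut (⇑σ) ![a0, a1] H ↔
        ∃ τ : K ≃+* K, (∀ c : K, σ c = c → τ c = c) ∧
          (∀ x : K, τ (σ x) = σ (τ x)) ∧
          ∃ k : K, k ≠ 0 ∧ τ a0 = k * σ k * a0 ∧ τ a1 = σ k * a1 ∧
            H = Hmap (⇑σ) (⇑τ) k := by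
  intro H
  constructor
  · exact petit_forward σ hσ a0 a1 hna H
  · rintro ⟨τ, hfix, hcomm, k, hk, ha0, ha1, rfl⟩
    exact petit_reverse σ τ a0 a1 k hk hfix hcomm ha0 ha1
end
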